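/- For every m ≥ 2 there exist real symmetric positive semidefinite matrices B_1,…,B_m with B_1 + ⋯ + B_m positive definite such that det(Σ_{j=1}^m x_j B_j) = c·e_2(x_1,…,x_m)·e_1(x_1,…,x_m)^{m−1} for some constant c > 0. -/

import Mathlib

/-!
Take `N = m + 1` and `B_j = 1 + e₀ e_{j+1}ᵀ + e_{j+1} e₀ᵀ`. Then `∑ x_j B_j = s • 1 + e₀ wᵀ + w e₀ᵀ`
with `s = e₁(x)` and `w = (0, x)`, a rank-two perturbation of a scalar matrix. Sylvester's identity
`det (c • 1 + A B) = c ^ (N - 2) * det (c • 1 + B A)`, a consequence of `charpoly_mul_comm_of_le`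
and so valid also at `c = 0`, reduces the determinant to a `2 × 2` one: it is
`s ^ (m - 1) * (s ^ 2 - ∑ x_j ^ 2)`, and `s ^ 2 - ∑ x_j ^ 2 = 2 e₂(x)` is Newton's identity.
Each `B_j` is a rank-one PSD matrix plus a `0/1` diagonal, and `∑ B_j` is PSD with determinant
`m ^ (m - 1) * (m ^ 2 - m) ≠ 0`, hence positive definite.
-/

open MvPolynomial

/-- The `k`-th elementary symmetric polynomial in the variables indexed by the finite set `S`. -/
noncomputable def esymmS {m : ℕ} (S : Finset (Fin m)) (k : ℕ) : MvPolynomial (Fin m) ℝ :=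
  ∑ T ∈ S.powersetCard k, ∏ j ∈ T, X j

theorem esymmS_univ {m : ℕ} (k : ℕ) : esymmS Finset.univ k = esymm (Fin m) ℝ k := rfl

theorem MvPolynomial.esymm_one_sq_sub_psum_two (σ R : Type*) [Fintype σ] [CommRing R] :
    esymm σ R 1 ^ 2 - psum σ R 2 = 2 * esymm σ R 2 := by
  have newton := mul_esymm_eq_sum σ R 2
  rw [Finset.sum_filter, Finset.Nat.sum_antidiagonal_eq_sum_range_succ_mk] at newton
  norm_num [Finset.sum_range_succ, esymm_zero, psum_one, ← esymm_one] at newton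
  linear_combination -newton

namespace Matrix

section Det

variable {R : Type*} [CommRing R] {m n : Type*} [Fintype m] [DecidableEq m] [Fintype n]
  [DecidableEq n]

theorem det_scalar_add_mul_comm (A : Matrix m n R) (B : Matrix n m R)
    (hle : Fintype.card n ≤ Fintype.card m) (c : R) :
    (scalar m c + A * B).det =
      c ^ (Fintype.card m - Fintype.card n) * (scalar n c + B * A).det := by
  have := congrArg (Polynomial.eval c) (charpoly_mul_comm_of_le (-A) B hle)
  simpa [eval_charpoly, sub_eq_add_neg] using this

theorem det_scalar_add_vecMulVec_add_vecMulVec (hn : 2 ≤ Fintype.card n) (c : R) (u v : n → R) :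
    (scalar n c + vecMulVec u v + vecMulVec v u).det =
      c ^ (Fintype.card n - 2) * ((c + u ⬝ᵥ v) ^ 2 - (u ⬝ᵥ u) * (v ⬝ᵥ v)) := by
  have hAB : (of ![u, v])ᵀ * of ![v, u] = vecMulVec u v + vecMulVec v u := by
    ext i j
    simp [mul_apply, vecMulVec_apply, Fin.sum_univ_two]
  have hBA : scalar (Fin 2) c + of ![v, u] * (of ![u, v])ᵀ =
      !![c + v ⬝ᵥ u, v ⬝ᵥ v; u ⬝ᵥ u, c + u ⬝ᵥ v] := by
    ext i j
    fin_cases i <;> fin_cases j <;> simp [vecMul, dotProduct]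
  rw [add_assoc, ← hAB, det_scalar_add_mul_comm _ _ (by simpa using hn), Fintype.card_fin, hBA,
    det_fin_two_of, dotProduct_comm v u]
  ring

end Det

section Single

variable {R : Type*} {n : Type*} [DecidableEq n]

theorem one_add_vecMulVec_single_add_vecMulVec_single [Ring R] {i k : n} (hik : i ≠ k) :
    (1 + vecMulVec (Pi.single i 1) (Pi.single k 1) + vecMulVec (Pi.single k 1) (Pi.single i 1) :
      Matrix n n R) =
    vecMulVec (Pi.single i 1 + Pi.single k 1 : n → R) (Pi.single i 1 + Pi.single k 1) +
      diagonal fun l => if l = i ∨ l = k then 0 else 1 := by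
  ext a b
  by_cases hai : a = i <;> by_cases hak : a = k <;> by_cases hbi : b = i <;>
    by_cases hbk : b = k <;>
    simp_all [vecMulVec_apply, one_apply, diagonal_apply, Pi.single_apply, eq_comm]

theorem posSemidef_one_add_vecMulVec_single_add_vecMulVec_single [CommRing R] [PartialOrder R]
    [StarRing R] [StarOrderedRing R] [TrivialStar R] [Fintype n] {i k : n} (hik : i ≠ k) :
    (1 + vecMulVec (Pi.single i 1) (Pi.single k 1) + vecMulVec (Pi.single k 1) (Pi.single i 1) :
      Matrix n n R).PosSemidef := by
  rw [one_add_vecMulVec_single_add_vecMulVec_single hik]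
  refine .add ?_ (.diagonal fun l => ?_)
  · simpa using posSemidef_vecMulVec_self_star (Pi.single i 1 + Pi.single k 1 : n → R)
  · dsimp only; split_ifs <;> simp

end Single

end Matrix

open Matrix

noncomputable def arrowPencil (m : ℕ) (j : Fin m) : Matrix (Fin (m + 1)) (Fin (m + 1)) ℝ :=
  1 + vecMulVec (Pi.single 0 1) (Pi.single j.succ 1) +
    vecMulVec (Pi.single j.succ 1) (Pi.single 0 1)

theorem sum_smul_arrowPencil {m : ℕ} (x : Fin m → ℝ) :
    ∑ j, x j • arrowPencil m j =
      scalar _ (∑ j, x j) + vecMulVec (Pi.single 0 1) (Fin.cons 0 x) +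
        vecMulVec (Fin.cons 0 x) (Pi.single 0 1) := by
  ext a b
  induction a using Fin.cases <;> induction b using Fin.cases <;>
    simp [arrowPencil, Matrix.sum_apply, vecMulVec_apply, Pi.single_apply, one_apply,
      diagonal_apply, Fin.succ_ne_zero, (Fin.succ_ne_zero _).symm, Fin.succ_inj]

theorem det_sum_smul_arrowPencil {m : ℕ} (hm : 2 ≤ m) (x : Fin m → ℝ) :
    (∑ j, x j • arrowPencil m j).det =
      (∑ j, x j) ^ (m - 1) * ((∑ j, x j) ^ 2 - ∑ j, x j ^ 2) := by
  have hcard : 2 ≤ Fintype.card (Fin (m + 1)) := by rw [Fintype.card_fin]; omega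
  rw [sum_smul_arrowPencil, det_scalar_add_vecMulVec_add_vecMulVec hcard]
  simp [Fin.sum_univ_succ, dotProduct, sq]

theorem arrowPencil_isSymm {m : ℕ} (j : Fin m) : (arrowPencil m j).IsSymm := by
  simp [arrowPencil, IsSymm, transpose_vecMulVec, add_right_comm]

theorem arrowPencil_posSemidef {m : ℕ} (j : Fin m) : (arrowPencil m j).PosSemidef :=
  posSemidef_one_add_vecMulVec_single_add_vecMulVec_single (Fin.succ_ne_zero j).symm

theorem sum_arrowPencil_posDef {m : ℕ} (hm : 2 ≤ m) : (∑ j, arrowPencil m j).PosDef := by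
  rw [(posSemidef_sum _ fun j _ => arrowPencil_posSemidef j).posDef_iff_det_ne_zero]
  have hdet := det_sum_smul_arrowPencil hm 1
  simp only [Pi.one_apply, one_smul, one_pow, Finset.sum_const, Finset.card_univ, Fintype.card_fin,
    nsmul_eq_mul, mul_one] at hdet
  have hm' : (2 : ℝ) ≤ m := by exact_mod_cast hm
  rw [hdet]
  exact (mul_pos (by positivity) (by nlinarith)).ne'

/-- For every `m ≥ 2` there are symmetric PSD matrices `B_1,…,B_m` with positive definite
sum such that `det(Σ_j x_j B_j) = c·e_2(x)·e_1(x)^{m-1}` for some `c > 0`. -/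
theorem e2_determinantal (m : ℕ) (hm : 2 ≤ m) :
    ∃ (N : ℕ) (B : Fin m → Matrix (Fin N) (Fin N) ℝ) (c : ℝ),
      0 < c ∧ (∀ j, (B j).IsSymm) ∧ (∀ j, (B j).PosSemidef) ∧
      (∑ j, B j).PosDef ∧
      ∀ x : Fin m → ℝ,
        (∑ j, x j • B j).det =
          c * eval x (esymmS (Finset.univ : Finset (Fin m)) 2) *
            eval x (esymmS (Finset.univ : Finset (Fin m)) 1) ^ (m - 1) := by
  refine ⟨m + 1, arrowPencil m, 2, two_pos, arrowPencil_isSymm, arrowPencil_posSemidef,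
    sum_arrowPencil_posDef hm, fun x => ?_⟩
  have newton : 2 * eval x (esymm (Fin m) ℝ 2) = (∑ j, x j) ^ 2 - ∑ j, x j ^ 2 := by
    simpa [esymm_one, psum] using (congrArg (eval x) (esymm_one_sq_sub_psum_two (Fin m) ℝ)).symm
  rw [esymmS_univ, esymmS_univ, newton, esymm_one, det_sum_smul_arrowPencil hm]
  simp [mul_comm]
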